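/- Let (Ω, μ) be a probability space, let 𝒮, 𝒳, 𝒴 be finite nonempty types, and let S : Ω → 𝒮, X : Ω → 𝒳, Y : Ω → 𝒴 be random variables such that μ(Y = y ∧ S = s) > 0 for all y ∈ 𝒴 and s ∈ 𝒮. Suppose S and X are conditionally independent given Y, i.e. for all s ∈ 𝒮, x ∈ 𝒳, y ∈ 𝒴 one has P(S = s ∧ X = x | Y = y) = P(S = s | Y = y) · P(X = x | Y = y). Then for every function q : 𝒳 → ℝ and every pair s⁺, s⁻ ∈ 𝒮, the direct effect DE(s⁺, s⁻) := Σ_{x ∈ 𝒳} Σ_{y ∈ 𝒴} q(x) · P(X = x | Y = y ∧ S = s⁺) · P(Y = y | S = s⁻) − Σ_{x ∈ 𝒳} Σ_{y ∈ 𝒴} q(x) · P(X = x | Y = y ∧ S = s⁻) · P(Y = y | S = s⁻) equals 0. -/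

import Mathlib

/-! Conditional independence of `S` and `X` given `Y` means `P(X = x | Y = y, S = s)` does not
depend on `s`, so the two sums defining the direct effect agree term by term. -/

open MeasureTheory

/-- Conditional probability `P(A | B) = μ(A ∩ B) / μ(B)` as a real number. -/
noncomputable def condP {Ω : Type*} [MeasurableSpace Ω] (μ : Measure Ω) (A B : Set Ω) : ℝ :=
  (μ (A ∩ B)).toReal / (μ B).toReal

theorem condP_inter_eq_of_condIndep {Ω : Type*} [MeasurableSpace Ω] {μ : Measure Ω}
    [IsFiniteMeasure μ] {A B C : Set Ω} (hCA : μ (C ∩ A) ≠ 0)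
    (h : condP μ (A ∩ B) C = condP μ A C * condP μ B C) :
    condP μ B (C ∩ A) = condP μ B C := by
  rw [Set.inter_comm C A] at hCA ⊢
  have hAC_pos : 0 < (μ (A ∩ C)).toReal := ENNReal.toReal_pos hCA (measure_ne_top μ _)
  have hC_pos : 0 < (μ C).toReal := hAC_pos.trans_le <|
    ENNReal.toReal_mono (measure_ne_top μ _) (measure_mono Set.inter_subset_right)
  have hABC : B ∩ (A ∩ C) = A ∩ B ∩ C := by
    rw [← Set.inter_assoc, Set.inter_comm B A]
  unfold condP at h ⊢
  rw [hABC]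
  field_simp at h ⊢
  linarith

theorem direct_effect_eq_zero_of_condIndep_general
    {Ω : Type*} [MeasurableSpace Ω] (μ : Measure Ω) [IsProbabilityMeasure μ]
    {𝒮 𝒳 𝒴 : Type*} [Fintype 𝒮] [Fintype 𝒳] [Fintype 𝒴]
    (S : Ω → 𝒮) (X : Ω → 𝒳) (Y : Ω → 𝒴)
    (hpos : ∀ (y : 𝒴) (s : 𝒮), 0 < μ {ω | Y ω = y ∧ S ω = s})
    (hCI : ∀ (s : 𝒮) (x : 𝒳) (y : 𝒴),
      condP μ {ω | S ω = s ∧ X ω = x} {ω | Y ω = y}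
        = condP μ {ω | S ω = s} {ω | Y ω = y} * condP μ {ω | X ω = x} {ω | Y ω = y})
    (q : 𝒳 → ℝ) (splus sminus : 𝒮) :
    (∑ x : 𝒳, ∑ y : 𝒴,
        q x * condP μ {ω | X ω = x} {ω | Y ω = y ∧ S ω = splus}
            * condP μ {ω | Y ω = y} {ω | S ω = sminus})
      - (∑ x : 𝒳, ∑ y : 𝒴,
        q x * condP μ {ω | X ω = x} {ω | Y ω = y ∧ S ω = sminus}
            * condP μ {ω | Y ω = y} {ω | S ω = sminus}) = 0 := by
  have hX_indep_S : ∀ s x y, condP μ {ω | X ω = x} {ω | Y ω = y ∧ S ω = s}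
      = condP μ {ω | X ω = x} {ω | Y ω = y} := fun s x y =>
    condP_inter_eq_of_condIndep (hpos y s).ne' (hCI s x y)
  simp only [hX_indep_S, sub_self]

/-- Sufficiency direction of Theorem 1: if `S` and `X` are conditionally independent
given `Y`, then the path-specific direct effect of `S` on the prediction vanishes. -/
theorem direct_effect_eq_zero_of_condIndep
    {Ω : Type*} [MeasurableSpace Ω] (μ : Measure Ω) [IsProbabilityMeasure μ]
    {𝒮 𝒳 𝒴 : Type*} [Fintype 𝒮] [Fintype 𝒳] [Fintype 𝒴]
    [Nonempty 𝒮] [Nonempty 𝒳] [Nonempty 𝒴]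
    (S : Ω → 𝒮) (X : Ω → 𝒳) (Y : Ω → 𝒴)
    (hpos : ∀ (y : 𝒴) (s : 𝒮), 0 < μ {ω | Y ω = y ∧ S ω = s})
    (hCI : ∀ (s : 𝒮) (x : 𝒳) (y : 𝒴),
      condP μ {ω | S ω = s ∧ X ω = x} {ω | Y ω = y}
        = condP μ {ω | S ω = s} {ω | Y ω = y} * condP μ {ω | X ω = x} {ω | Y ω = y})
    (q : 𝒳 → ℝ) (splus sminus : 𝒮) :
    (∑ x : 𝒳, ∑ y : 𝒴,
        q x * condP μ {ω | X ω = x} {ω | Y ω = y ∧ S ω = splus}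
            * condP μ {ω | Y ω = y} {ω | S ω = sminus})
      - (∑ x : 𝒳, ∑ y : 𝒴,
        q x * condP μ {ω | X ω = x} {ω | Y ω = y ∧ S ω = sminus}
            * condP μ {ω | Y ω = y} {ω | S ω = sminus}) = 0 :=
  direct_effect_eq_zero_of_condIndep_general μ S X Y hpos hCI q splus sminus
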